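/- Let G be a finite simple graph with twin cover T and majority threshold function f, and let S be a target set of G. Let C and D be twin cliques of the same type (N(C) = N(D)) with k_C > 0 and k_D > 0, with |C| ≥ |D|, such that |S ∩ C| = k_C (C has no excess vertices) and D is activated strictly before C in the process arising from S, i.e., A_S(D) < A_S(C). Then there exists a target set S′ with |S′| = |S| such that A_{S′}(C) ≤ A_{S′}(D). -/

import Mathlib

open Finset

variable {V : Type*} [Fintype V] [DecidableEq V]

/-- One round of the activation process: a vertex becomes active if the number of its
already active neighbors is at least its threshold. -/
def actStep (G : SimpleGraph V) [DecidableRel G.Adj] (f : V → ℕ) (S : Finset V) : Finset V :=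
  S ∪ Finset.univ.filter fun v => f v ≤ (G.neighborFinset v ∩ S).card

/-- The activation process arising from `S`: `S_0 = S` and
`S_{i+1} = S_i ∪ {v : |N(v) ∩ S_i| ≥ f v}`. -/
def actProcess (G : SimpleGraph V) [DecidableRel G.Adj] (f : V → ℕ) (S : Finset V) : ℕ → Finset V
  | 0 => S
  | i + 1 => actStep G f (actProcess G f S i)

/-- `S` is a target set if the activation process arising from `S` eventually
activates the whole graph. -/
def IsTargetSet (G : SimpleGraph V) [DecidableRel G.Adj] (f : V → ℕ) (S : Finset V) : Prop :=
  ∃ i, actProcess G f S i = Finset.univ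

/-- Two (distinct) vertices have the same neighborhood type if
`N(u) \ {v} = N(v) \ {u}`. -/
def SameNType (G : SimpleGraph V) (u v : V) : Prop :=
  G.neighborSet u \ {v} = G.neighborSet v \ {u}

/-- `T` is a twin cover of `G` if every edge of `G` has an endpoint in `T`
or is a twin edge (its endpoints have the same neighborhood type). -/
def IsTwinCover (G : SimpleGraph V) (T : Finset V) : Prop :=
  ∀ u v : V, G.Adj u v → u ∈ T ∨ v ∈ T ∨ SameNType G u v

/-- The majority threshold function `f(v) = ⌈deg(v)/2⌉`. -/
def majority (G : SimpleGraph V) [DecidableRel G.Adj] (v : V) : ℕ :=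
  (G.degree v + 1) / 2

/-- For a twin clique `C` with common cover-neighborhood `NC`, the common majority
threshold is `f'(C) = ⌈((|C| - 1) + |NC|)/2⌉ = (|C| + |NC|)/2`, and
`k_C = max(f'(C) - |NC|, 0)` (natural subtraction). -/
def kval (C NC : Finset V) : ℕ :=
  (C.card + NC.card) / 2 - NC.card

/-- `A_S(C)`: the round in which the twin clique `C` is activated in the activation
process arising from `S`, i.e. the least `i` with `C ⊆ S_i`. -/
noncomputable def actRound (G : SimpleGraph V) [DecidableRel G.Adj] (f : V → ℕ)
    (S C : Finset V) : ℕ :=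
  sInf {i | C ⊆ actProcess G f S i}

section Aux
variable {G : SimpleGraph V} [DecidableRel G.Adj] {f : V → ℕ}

lemma mem_actStep {S : Finset V} {v : V} :
    v ∈ actStep G f S ↔ v ∈ S ∨ f v ≤ (G.neighborFinset v ∩ S).card := by
  simp [actStep]

lemma subset_actStep (S : Finset V) : S ⊆ actStep G f S := subset_union_left

lemma actProcess_mono {S : Finset V} : Monotone (actProcess G f S) :=
  monotone_nat_of_le_succ fun i => subset_actStep _

lemma actStep_mono {S S' : Finset V} (h : S ⊆ S') : actStep G f S ⊆ actStep G f S' := by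
  intro v hv
  rcases mem_actStep.1 hv with h1 | h1
  · exact mem_actStep.2 (Or.inl (h h1))
  · exact mem_actStep.2 (Or.inr (h1.trans (card_le_card (inter_subset_inter (Finset.Subset.refl _) h))))

lemma seed_subset_actProcess {S : Finset V} (i : ℕ) : S ⊆ actProcess G f S i :=
  actProcess_mono (Nat.zero_le i)

/-- counting neighbors of a clique vertex -/
lemma clique_count {Cc NQ : Finset V} (hdisj : Disjoint Cc NQ)
    (hnbr : ∀ v ∈ Cc, G.neighborFinset v = Cc.erase v ∪ NQ)
    {v : V} (hv : v ∈ Cc) {A : Finset V} (hvA : v ∉ A) :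
    (G.neighborFinset v ∩ A).card = (Cc ∩ A).card + (NQ ∩ A).card := by
  rw [hnbr v hv, union_inter_distrib_right, card_union_of_disjoint, erase_inter,
    erase_eq_of_notMem (by simp [hvA])]
  exact (disjoint_of_subset_left (erase_subset _ _) hdisj).mono_right inter_subset_left
    |>.mono_left inter_subset_left

lemma clique_degree {Cc NQ : Finset V} (hdisj : Disjoint Cc NQ)
    (hnbr : ∀ v ∈ Cc, G.neighborFinset v = Cc.erase v ∪ NQ)
    {v : V} (hv : v ∈ Cc) :
    G.degree v = Cc.card - 1 + NQ.card := by
  rw [← SimpleGraph.card_neighborFinset_eq_degree, hnbr v hv, card_union_of_disjoint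
    (disjoint_of_subset_left (erase_subset _ _) hdisj), card_erase_of_mem hv]

lemma big_card {Cc NQ : Finset V} (hbig : 0 < kval Cc NQ) : NQ.card + 2 ≤ Cc.card := by
  unfold kval at hbig; omega

lemma clique_majority {Cc NQ : Finset V} (hdisj : Disjoint Cc NQ)
    (hnbr : ∀ v ∈ Cc, G.neighborFinset v = Cc.erase v ∪ NQ)
    (hbig : 0 < kval Cc NQ) {v : V} (hv : v ∈ Cc) :
    majority G v = kval Cc NQ + NQ.card := by
  have h1 := clique_degree hdisj hnbr hv
  have h2 := big_card hbig
  unfold majority kval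
  rw [h1]; omega

lemma clique_binary {Cc NQ : Finset V} (hdisj : Disjoint Cc NQ)
    (hnbr : ∀ v ∈ Cc, G.neighborFinset v = Cc.erase v ∪ NQ)
    (hbig : 0 < kval Cc NQ)
    (A : Finset V) (i : ℕ) :
    Cc ∩ actProcess G (majority G) A i = Cc ∩ A ∨ Cc ⊆ actProcess G (majority G) A i := by
  induction i with
  | zero => exact Or.inl rfl
  | succ i ih =>
    rcases ih with ih | ih
    · set P := actProcess G (majority G) A i with hP
      by_cases h : ∃ v ∈ Cc, v ∉ P ∧ v ∈ actStep G (majority G) P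
      · right
        obtain ⟨v, hvC, hvP, hvS⟩ := h
        have hcnt : majority G v ≤ (Cc ∩ P).card + (NQ ∩ P).card := by
          rcases mem_actStep.1 hvS with h1 | h1
          · exact absurd h1 hvP
          · rwa [clique_count hdisj hnbr hvC hvP] at h1
        intro u huC
        show u ∈ actStep G (majority G) P
        by_cases huP : u ∈ P
        · exact subset_actStep _ huP
        · refine mem_actStep.2 (Or.inr ?_)
          rw [clique_count hdisj hnbr huC huP, clique_majority hdisj hnbr hbig huC]
          rw [clique_majority hdisj hnbr hbig hvC] at hcnt
          exact hcnt
      · left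
        show Cc ∩ actStep G (majority G) P = Cc ∩ A
        rw [← ih]
        apply Finset.Subset.antisymm
        · intro u hu
          rcases mem_inter.1 hu with ⟨h1, h2⟩
          refine mem_inter.2 ⟨h1, ?_⟩
          by_contra huP
          exact h ⟨u, h1, huP, h2⟩
        · exact inter_subset_inter (Finset.Subset.refl _) (subset_actStep _)
    · exact Or.inr (ih.trans (subset_actStep _))

lemma clique_act_of_count {Cc NQ : Finset V} (hdisj : Disjoint Cc NQ)
    (hnbr : ∀ v ∈ Cc, G.neighborFinset v = Cc.erase v ∪ NQ)
    (hbig : 0 < kval Cc NQ) {A : Finset V} {i : ℕ}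
    (h : kval Cc NQ + NQ.card ≤ (Cc ∩ actProcess G (majority G) A i).card
        + (NQ ∩ actProcess G (majority G) A i).card) :
    Cc ⊆ actProcess G (majority G) A (i + 1) := by
  intro u huC
  show u ∈ actStep G (majority G) (actProcess G (majority G) A i)
  by_cases huP : u ∈ actProcess G (majority G) A i
  · exact subset_actStep _ huP
  · refine mem_actStep.2 (Or.inr ?_)
    rw [clique_count hdisj hnbr huC huP, clique_majority hdisj hnbr hbig huC]
    exact h

lemma clique_count_of_act {Cc NQ : Finset V} (hdisj : Disjoint Cc NQ)
    (hnbr : ∀ v ∈ Cc, G.neighborFinset v = Cc.erase v ∪ NQ)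
    (hbig : 0 < kval Cc NQ) {A : Finset V} {i : ℕ}
    (hprev : ¬ Cc ⊆ actProcess G (majority G) A i)
    (hnow : Cc ⊆ actProcess G (majority G) A (i + 1)) :
    kval Cc NQ + NQ.card ≤ (Cc ∩ A).card + (NQ ∩ actProcess G (majority G) A i).card := by
  obtain ⟨v, hvC, hvP⟩ := not_subset.1 hprev
  have hv := hnow hvC
  rcases mem_actStep.1 hv with h1 | h1
  · exact absurd h1 hvP
  · rw [clique_count hdisj hnbr hvC hvP, clique_majority hdisj hnbr hbig hvC] at h1
    rcases clique_binary hdisj hnbr hbig A i with hb | hb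
    · rwa [hb] at h1
    · exact absurd hb hprev

lemma actProcess_zero {G : SimpleGraph V} [DecidableRel G.Adj] {f : V → ℕ} {S : Finset V} :
    actProcess G f S 0 = S := rfl

lemma actProcess_succ {G : SimpleGraph V} [DecidableRel G.Adj] {f : V → ℕ} {S : Finset V} {i : ℕ} :
    actProcess G f S (i + 1) = actStep G f (actProcess G f S i) := rfl


end Aux

theorem main_thm (G : SimpleGraph V) [DecidableRel G.Adj]
    (Cc Dc NQ : Finset V)
    (hCNQ : Disjoint Cc NQ) (hDNQ : Disjoint Dc NQ) (hCD : Disjoint Cc Dc)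
    (hnbrC : ∀ v ∈ Cc, G.neighborFinset v = Cc.erase v ∪ NQ)
    (hnbrD : ∀ v ∈ Dc, G.neighborFinset v = Dc.erase v ∪ NQ)
    (hbigC : 0 < kval Cc NQ) (hbigD : 0 < kval Dc NQ)
    (hsize : Dc.card ≤ Cc.card)
    (S : Finset V) (hS : IsTargetSet G (majority G) S)
    (hnoexcess : (S ∩ Cc).card = kval Cc NQ) :
    ∃ S' : Finset V, S'.card = S.card ∧ IsTargetSet G (majority G) S' ∧
      actRound G (majority G) S' Cc ≤ actRound G (majority G) S' Dc := by
  classical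
  have hc2 : NQ.card + 2 ≤ Cc.card := big_card hbigC
  have hd2 : NQ.card + 2 ≤ Dc.card := big_card hbigD
  have hC' : kval Cc NQ = (Cc.card + NQ.card) / 2 - NQ.card := rfl
  have hD' : kval Dc NQ = (Dc.card + NQ.card) / 2 - NQ.card := rfl
  have hSC : (Cc ∩ S).card = kval Cc NQ := by rw [inter_comm]; exact hnoexcess
  have hsd : (Dc ∩ S).card ≤ Dc.card := card_le_card inter_subset_left
  obtain ⟨N, hN⟩ := hS
  -- `D` has at least `k_D` seeds
  have hsge : kval Dc NQ ≤ (Dc ∩ S).card := by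
    have key : ∀ i, Dc ⊆ actProcess G (majority G) S i → kval Dc NQ ≤ (Dc ∩ S).card := by
      intro i
      induction i with
      | zero =>
        intro h
        rw [actProcess_zero] at h
        rw [inter_eq_left.2 h]
        omega
      | succ i ih =>
        intro h
        by_cases hp : Dc ⊆ actProcess G (majority G) S i
        · exact ih hp
        · have hcnt := clique_count_of_act hDNQ hnbrD hbigD hp h
          have hle : (NQ ∩ actProcess G (majority G) S i).card ≤ NQ.card :=
            card_le_card inter_subset_left
          omega
    exact key N (by rw [hN]; exact subset_univ _)
  -- construct the new seed set
  have hXle : kval Cc NQ + ((Dc ∩ S).card - kval Dc NQ) ≤ Cc.card := by omega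
  obtain ⟨X, hXsub, hXcard⟩ := Finset.exists_subset_card_eq (s := Cc) hXle
  obtain ⟨Y, hYsub, hYcard⟩ := Finset.exists_subset_card_eq (s := Dc) (n := kval Dc NQ) (by omega)
  set S' := (S \ (Cc ∪ Dc)) ∪ X ∪ Y with hS'def
  have hXS' : X ⊆ S' := fun x hx => mem_union_left _ (mem_union_right _ hx)
  have hYS' : Y ⊆ S' := fun x hx => mem_union_right _ hx
  have hS'C : S' ∩ Cc = X := by
    ext x
    simp only [hS'def, mem_inter, mem_union, mem_sdiff]
    constructor
    · rintro ⟨(⟨-, hn⟩ | hx) | hx, hc⟩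
      · exact absurd (Or.inl hc) hn
      · exact hx
      · exact absurd hc (disjoint_right.1 hCD (hYsub hx))
    · intro hx
      exact ⟨Or.inl (Or.inr hx), hXsub hx⟩
  have hS'D : S' ∩ Dc = Y := by
    ext x
    simp only [hS'def, mem_inter, mem_union, mem_sdiff]
    constructor
    · rintro ⟨(⟨-, hn⟩ | hx) | hx, hc⟩
      · exact absurd (Or.inr hc) hn
      · exact absurd hc (disjoint_left.1 hCD (hXsub hx))
      · exact hx
    · intro hx
      exact ⟨Or.inr hx, hYsub hx⟩
  -- cardinality
  have hcard : S'.card = S.card := by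
    have hdisj1 : Disjoint (S \ (Cc ∪ Dc)) X :=
      disjoint_left.2 fun x hx hx' => (mem_sdiff.1 hx).2 (mem_union_left _ (hXsub hx'))
    have hdisj2 : Disjoint (S \ (Cc ∪ Dc) ∪ X) Y := by
      refine disjoint_left.2 fun x hx hx' => ?_
      rcases mem_union.1 hx with hx | hx
      · exact (mem_sdiff.1 hx).2 (mem_union_right _ (hYsub hx'))
      · exact disjoint_left.1 hCD (hXsub hx) (hYsub hx')
    have h1 : S'.card = (S \ (Cc ∪ Dc)).card + X.card + Y.card := by
      rw [hS'def, card_union_of_disjoint hdisj2, card_union_of_disjoint hdisj1]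
    have h2 : (S \ (Cc ∪ Dc)).card + (S ∩ (Cc ∪ Dc)).card = S.card :=
      card_sdiff_add_card_inter _ _
    have h3 : (S ∩ (Cc ∪ Dc)).card = (Cc ∩ S).card + (Dc ∩ S).card := by
      rw [inter_union_distrib_left, card_union_of_disjoint
        (hCD.mono inter_subset_right inter_subset_right), inter_comm S Cc, inter_comm S Dc]
    omega
  -- seeds stay active
  have hXQ : ∀ i, X ⊆ Cc ∩ actProcess G (majority G) S' i := fun i =>
    subset_inter hXsub (hXS'.trans (seed_subset_actProcess i))
  have hYQ : ∀ i, Y ⊆ Dc ∩ actProcess G (majority G) S' i := fun i =>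
    subset_inter hYsub (hYS'.trans (seed_subset_actProcess i))
  have hS'Ccard : (Cc ∩ S').card = X.card := by rw [inter_comm, hS'C]
  have hS'Dcard : (Dc ∩ S').card = Y.card := by rw [inter_comm, hS'D]
  -- the sum comparison
  have hsum : ∀ i,
      (Cc ⊆ actProcess G (majority G) S i →
        Cc ⊆ actProcess G (majority G) S' i ∧ Dc ⊆ actProcess G (majority G) S' i) →
      (Dc ⊆ actProcess G (majority G) S i →
        Cc ⊆ actProcess G (majority G) S' i ∨ (Dc ∩ S).card = Dc.card) →
      (Cc ∩ actProcess G (majority G) S i).card + (Dc ∩ actProcess G (majority G) S i).card ≤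
      (Cc ∩ actProcess G (majority G) S' i).card + (Dc ∩ actProcess G (majority G) S' i).card := by
    intro i h2 h3
    have hXi := card_le_card (hXQ i)
    have hYi := card_le_card (hYQ i)
    rcases clique_binary hCNQ hnbrC hbigC S i with hbC | hbC
    · rcases clique_binary hDNQ hnbrD hbigD S i with hbD | hbD
      · rw [hbC, hbD]
        omega
      · rcases h3 hbD with hcq | hsd2
        · have h5 : (Cc ∩ actProcess G (majority G) S' i).card = Cc.card := by
            rw [inter_eq_left.2 hcq]
          have h7 : (Cc ∩ actProcess G (majority G) S i).card = kval Cc NQ := by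
            rw [hbC, hSC]
          have h8 : (Dc ∩ actProcess G (majority G) S i).card ≤ Dc.card :=
            card_le_card inter_subset_left
          omega
        · have h7 : (Cc ∩ actProcess G (majority G) S i).card = kval Cc NQ := by
            rw [hbC, hSC]
          have h8 : (Dc ∩ actProcess G (majority G) S i).card ≤ Dc.card :=
            card_le_card inter_subset_left
          omega
    · obtain ⟨hcq, hdq⟩ := h2 hbC
      have h5 : (Cc ∩ actProcess G (majority G) S' i).card = Cc.card := by
        rw [inter_eq_left.2 hcq]
      have h6 : (Dc ∩ actProcess G (majority G) S' i).card = Dc.card := by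
        rw [inter_eq_left.2 hdq]
      have h7 : (Cc ∩ actProcess G (majority G) S i).card ≤ Cc.card :=
        card_le_card inter_subset_left
      have h8 : (Dc ∩ actProcess G (majority G) S i).card ≤ Dc.card :=
        card_le_card inter_subset_left
      omega
  -- main invariant
  have main : ∀ i : ℕ,
      (∀ w, w ∉ Cc → w ∉ Dc → w ∈ actProcess G (majority G) S i →
        w ∈ actProcess G (majority G) S' i)
      ∧ (Cc ⊆ actProcess G (majority G) S i →
        Cc ⊆ actProcess G (majority G) S' i ∧ Dc ⊆ actProcess G (majority G) S' i)
      ∧ (Dc ⊆ actProcess G (majority G) S i →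
        Cc ⊆ actProcess G (majority G) S' i ∨ (Dc ∩ S).card = Dc.card) := by
    intro i
    induction i with
    | zero =>
      refine ⟨?_, ?_, ?_⟩
      · intro w hwC hwD hw
        rw [actProcess_zero] at hw ⊢
        exact mem_union_left _ (mem_union_left _ (mem_sdiff.2 ⟨hw, by simp [hwC, hwD]⟩))
      · intro h
        rw [actProcess_zero] at h
        exfalso
        have : (Cc ∩ S).card = Cc.card := by rw [inter_eq_left.2 h]
        omega
      · intro h
        rw [actProcess_zero] at h
        exact Or.inr (by rw [inter_eq_left.2 h])
    | succ i ih =>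
      obtain ⟨ih1, ih2, ih3⟩ := ih
      have hsumi := hsum i ih2 ih3
      have hNQsub : NQ ∩ actProcess G (majority G) S i ⊆
          NQ ∩ actProcess G (majority G) S' i := by
        intro x hx
        obtain ⟨hx1, hx2⟩ := mem_inter.1 hx
        exact mem_inter.2 ⟨hx1, ih1 x (disjoint_right.1 hCNQ hx1)
          (disjoint_right.1 hDNQ hx1) hx2⟩
      refine ⟨?_, ?_, ?_⟩
      · intro w hwC hwD hw
        rw [actProcess_succ] at hw ⊢
        rcases mem_actStep.1 hw with h1 | h1
        · exact subset_actStep _ (ih1 w hwC hwD h1)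
        · refine mem_actStep.2 (Or.inr (le_trans h1 ?_))
          by_cases hadj : ∃ u ∈ Cc ∪ Dc, G.Adj w u
          · obtain ⟨u, hu, huadj⟩ := hadj
            have hwNQ : w ∈ NQ := by
              have hwn : w ∈ G.neighborFinset u := by
                rw [SimpleGraph.mem_neighborFinset]; exact huadj.symm
              rcases mem_union.1 hu with hu' | hu'
              · rw [hnbrC u hu'] at hwn
                rcases mem_union.1 hwn with h | h
                · exact absurd (mem_of_mem_erase h) hwC
                · exact h
              · rw [hnbrD u hu'] at hwn
                rcases mem_union.1 hwn with h | h
                · exact absurd (mem_of_mem_erase h) hwD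
                · exact h
            have hCDsub : Cc ∪ Dc ⊆ G.neighborFinset w := by
              intro x hx
              rw [SimpleGraph.mem_neighborFinset]
              rcases mem_union.1 hx with hx' | hx'
              · have : w ∈ G.neighborFinset x := by
                  rw [hnbrC x hx']; exact mem_union_right _ hwNQ
                exact ((SimpleGraph.mem_neighborFinset _ _ _).1 this).symm
              · have : w ∈ G.neighborFinset x := by
                  rw [hnbrD x hx']; exact mem_union_right _ hwNQ
                exact ((SimpleGraph.mem_neighborFinset _ _ _).1 this).symm
            have key : ∀ A : Finset V, (G.neighborFinset w ∩ A).card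
                = ((G.neighborFinset w ∩ A) \ (Cc ∪ Dc)).card + ((Cc ∩ A).card + (Dc ∩ A).card) := by
              intro A
              have h2 : (G.neighborFinset w ∩ A) ∩ (Cc ∪ Dc) = (Cc ∪ Dc) ∩ A := by
                rw [inter_comm (G.neighborFinset w) A, inter_assoc,
                  inter_eq_right.2 hCDsub, inter_comm]
              have h3 := card_sdiff_add_card_inter (G.neighborFinset w ∩ A) (Cc ∪ Dc)
              rw [h2] at h3
              have h4 : ((Cc ∪ Dc) ∩ A).card = (Cc ∩ A).card + (Dc ∩ A).card := by
                rw [union_inter_distrib_right, card_union_of_disjoint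
                  (hCD.mono inter_subset_left inter_subset_left)]
              omega
            rw [key (actProcess G (majority G) S i), key (actProcess G (majority G) S' i)]
            have h5 : ((G.neighborFinset w ∩ actProcess G (majority G) S i) \ (Cc ∪ Dc)).card ≤
                ((G.neighborFinset w ∩ actProcess G (majority G) S' i) \ (Cc ∪ Dc)).card := by
              apply card_le_card
              intro x hx
              obtain ⟨hx1, hx2⟩ := mem_sdiff.1 hx
              obtain ⟨hx3, hx4⟩ := mem_inter.1 hx1
              have hxC : x ∉ Cc := fun hh => hx2 (mem_union_left _ hh)
              have hxD : x ∉ Dc := fun hh => hx2 (mem_union_right _ hh)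
              exact mem_sdiff.2 ⟨mem_inter.2 ⟨hx3, ih1 x hxC hxD hx4⟩, hx2⟩
            omega
          · apply card_le_card
            intro x hx
            obtain ⟨hxN, hxP⟩ := mem_inter.1 hx
            have hadjx : G.Adj w x := (SimpleGraph.mem_neighborFinset _ _ _).1 hxN
            have hxC : x ∉ Cc := fun hh => hadj ⟨x, mem_union_left _ hh, hadjx⟩
            have hxD : x ∉ Dc := fun hh => hadj ⟨x, mem_union_right _ hh, hadjx⟩
            exact mem_inter.2 ⟨hxN, ih1 x hxC hxD hxP⟩
      · intro h
        by_cases hp : Cc ⊆ actProcess G (majority G) S i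
        · obtain ⟨a, b⟩ := ih2 hp
          exact ⟨a.trans (actProcess_mono (Nat.le_succ i)),
            b.trans (actProcess_mono (Nat.le_succ i))⟩
        · have hcnt := clique_count_of_act hCNQ hnbrC hbigC hp h
          rw [hSC] at hcnt
          have han := card_le_card hNQsub
          have hXi := card_le_card (hXQ i)
          have hYi := card_le_card (hYQ i)
          exact ⟨clique_act_of_count hCNQ hnbrC hbigC (by omega),
            clique_act_of_count hDNQ hnbrD hbigD (by omega)⟩
      · intro h
        by_cases hp : Dc ⊆ actProcess G (majority G) S i
        · rcases ih3 hp with h' | h'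
          · exact Or.inl (h'.trans (actProcess_mono (Nat.le_succ i)))
          · exact Or.inr h'
        · have hcnt := clique_count_of_act hDNQ hnbrD hbigD hp h
          have han := card_le_card hNQsub
          have hXi := card_le_card (hXQ i)
          have h7 : (NQ ∩ actProcess G (majority G) S i).card ≤ NQ.card :=
            card_le_card inter_subset_left
          exact Or.inl (clique_act_of_count hCNQ hnbrC hbigC (by omega))
  -- S' is a target set
  have htarget : IsTargetSet G (majority G) S' := by
    refine ⟨N, eq_univ_iff_forall.2 fun w => ?_⟩
    obtain ⟨m1, m2, m3⟩ := main N
    by_cases hwC : w ∈ Cc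
    · exact (m2 (by rw [hN]; exact subset_univ _)).1 hwC
    by_cases hwD : w ∈ Dc
    · exact (m2 (by rw [hN]; exact subset_univ _)).2 hwD
    · exact m1 w hwC hwD (by rw [hN]; exact mem_univ w)
  -- C is activated no later than D
  have hDC : ∀ i, Dc ⊆ actProcess G (majority G) S' i →
      Cc ⊆ actProcess G (majority G) S' i := by
    intro i
    induction i with
    | zero =>
      intro h
      rw [actProcess_zero] at h
      exfalso
      have : (Dc ∩ S').card = Dc.card := by rw [inter_eq_left.2 h]
      rw [hS'Dcard] at this
      omega
    | succ i ih =>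
      intro h
      by_cases hp : Dc ⊆ actProcess G (majority G) S' i
      · exact (ih hp).trans (actProcess_mono (Nat.le_succ i))
      · have hcnt := clique_count_of_act hDNQ hnbrD hbigD hp h
        rw [hS'Dcard, hYcard] at hcnt
        have hXi := card_le_card (hXQ i)
        have h7 : (NQ ∩ actProcess G (majority G) S' i).card ≤ NQ.card :=
          card_le_card inter_subset_left
        exact clique_act_of_count hCNQ hnbrC hbigC (by omega)
  refine ⟨S', hcard, htarget, ?_⟩
  obtain ⟨M, hM⟩ := htarget
  have hne : (setOf fun i => Dc ⊆ actProcess G (majority G) S' i).Nonempty :=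
    ⟨M, by show Dc ⊆ actProcess G (majority G) S' M; rw [hM]; exact subset_univ _⟩
  exact Nat.sInf_le (hDC _ (Nat.sInf_mem hne))

/-- Big cliques of the same type can be activated from the largest to the smallest:
if `C` and `D` are big twin cliques of the same type with `|C| ≥ |D|`, `C` has no excess
vertices in the target set `S`, and `D` is activated strictly before `C`, then there is a
target set `S'` of the same size in which `C` is activated no later than `D`. -/
theorem big_cliques_largest_first (G : SimpleGraph V) [DecidableRel G.Adj]
    (T : Finset V) (htc : IsTwinCover G T)
    (Cc Dc NQ : Finset V)
    (hCT : Disjoint Cc T) (hDT : Disjoint Dc T) (hCD : Disjoint Cc Dc)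
    (hNQ : NQ ⊆ T)
    (hnbrC : ∀ v ∈ Cc, G.neighborFinset v = Cc.erase v ∪ NQ)
    (hnbrD : ∀ v ∈ Dc, G.neighborFinset v = Dc.erase v ∪ NQ)
    (hbigC : 0 < kval Cc NQ) (hbigD : 0 < kval Dc NQ)
    (hsize : Dc.card ≤ Cc.card)
    (S : Finset V) (hS : IsTargetSet G (majority G) S)
    (hnoexcess : (S ∩ Cc).card = kval Cc NQ)
    (hfirst : actRound G (majority G) S Dc < actRound G (majority G) S Cc) :
    ∃ S' : Finset V, S'.card = S.card ∧ IsTargetSet G (majority G) S' ∧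
      actRound G (majority G) S' Cc ≤ actRound G (majority G) S' Dc :=
  main_thm G Cc Dc NQ (hCT.mono_right hNQ) (hDT.mono_right hNQ) hCD hnbrC hnbrD
    hbigC hbigD hsize S hS hnoexcess
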